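/- arXiv:2208.02855 — 8 statements merged into one kernel-verified Lean document; each statement's English description precedes it below -/
import Mathlib

section
/- Let y : [0,∞) → ℝ be a continuous function with y(0) ≥ 0. Define x(t) = y(t) - min(0, inf_{0≤s≤t} y(s)) and k(t) = -min(0, inf_{0≤s≤t} y(s)). Then (x, k) solves the one-dimensional Skorokhod problem for y: x(t) = y(t) + k(t) ≥ 0 for all t, k(0) = 0, k is nondecreasing, and k increases only at times t when x(t) = 0. -/
/-!
With `m t = inf_{[0,t]} y`, the regulator `k = -min 0 m` is nondecreasing because `m` is
nonincreasing. If `k` increased on `[a, b]`, then `m b < m a` and `m b < 0`; the infimum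
over `[0, b]` is attained (by continuity) at some `s ∈ (a, b]`, where `m s = y s = m b`, so
`x s = y s + k s = 0`.
-/

open Set

noncomputable def runningInf (f : ℝ → ℝ) (t : ℝ) : ℝ := sInf (f '' Icc 0 t)

namespace runningInf

variable {f : ℝ → ℝ}

theorem zero_eq (f : ℝ → ℝ) : runningInf f 0 = f 0 := by
  simp [runningInf]

theorem le_apply (hf : Continuous f) {s t : ℝ} (hs : s ∈ Icc 0 t) : runningInf f t ≤ f s :=
  csInf_le (isCompact_Icc.image hf).bddBelow (mem_image_of_mem f hs)

theorem antitoneOn (hf : Continuous f) : AntitoneOn (runningInf f) (Ici 0) :=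
  fun a ha _ _ hab => csInf_le_csInf (isCompact_Icc.image hf).bddBelow
    ⟨f a, mem_image_of_mem f ⟨ha, le_rfl⟩⟩ (image_mono (Icc_subset_Icc_right hab))

theorem exists_apply_eq (hf : Continuous f) {t : ℝ} (ht : 0 ≤ t) :
    ∃ s ∈ Icc 0 t, f s = runningInf f t :=
  (isCompact_Icc.image hf).sInf_mem ⟨f t, mem_image_of_mem f ⟨ht, le_rfl⟩⟩

theorem exists_mem_Ioc_apply_eq_of_lt (hf : Continuous f) {a b : ℝ} (hb : 0 ≤ b)
    (hlt : runningInf f b < runningInf f a) :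
    ∃ s ∈ Ioc a b, f s = runningInf f s ∧ runningInf f s = runningInf f b := by
  obtain ⟨s, ⟨hs0, hsb⟩, hfs⟩ := exists_apply_eq hf hb
  have has : a < s := by
    by_contra! hsa
    linarith [le_apply hf ⟨hs0, hsa⟩]
  have hle : runningInf f s ≤ f s := le_apply hf ⟨hs0, le_rfl⟩
  have hge : runningInf f b ≤ runningInf f s := antitoneOn hf hs0 hb hsb
  exact ⟨s, ⟨has, hsb⟩, by linarith, by linarith⟩

end runningInf

/-- The explicit solution of the one-dimensional Skorokhod problem. -/
theorem skorokhod_one_dim (y x k : ℝ → ℝ) (hy : Continuous y) (hy0 : 0 ≤ y 0)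
    (hx : ∀ t, x t = y t - min 0 (sInf (y '' Set.Icc 0 t)))
    (hk : ∀ t, k t = - min 0 (sInf (y '' Set.Icc 0 t))) :
    (∀ t, 0 ≤ t → x t = y t + k t ∧ 0 ≤ x t) ∧
    k 0 = 0 ∧
    MonotoneOn k (Set.Ici (0 : ℝ)) ∧
    (∀ a b : ℝ, 0 ≤ a → a ≤ b → (∀ t ∈ Set.Icc a b, 0 < x t) → k b = k a) := by
  replace hx : ∀ t, x t = y t - min 0 (runningInf y t) := hx
  replace hk : ∀ t, k t = - min 0 (runningInf y t) := hk
  refine ⟨fun t ht => ⟨by rw [hx, hk]; ring, ?_⟩, ?_, ?_, ?_⟩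
  · rw [hx]
    linarith [min_le_right 0 (runningInf y t), runningInf.le_apply hy ⟨ht, le_rfl⟩]
  · rw [hk, runningInf.zero_eq, min_eq_left hy0, neg_zero]
  · intro a ha b hb hab
    rw [hk, hk, neg_le_neg_iff]
    exact min_le_min le_rfl (runningInf.antitoneOn hy ha hb hab)
  · intro a b ha hab hpos
    by_contra hne
    have hba : runningInf y b ≤ runningInf y a := runningInf.antitoneOn hy ha (ha.trans hab) hab
    have hlt : runningInf y b < runningInf y a := hba.lt_of_ne fun h => hne (by rw [hk, hk, h])
    have hneg : runningInf y b < 0 := by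
      by_contra! h
      exact hne (by rw [hk, hk, min_eq_left h, min_eq_left (h.trans hba)])
    obtain ⟨s, ⟨has, hsb⟩, hys, hms⟩ :=
      runningInf.exists_mem_Ioc_apply_eq_of_lt hy (ha.trans hab) hlt
    have hxs : x s = 0 := by rw [hx, hys, hms, min_eq_right hneg.le, sub_self]
    exact (hpos s ⟨has.le, hsb⟩).ne' hxs
end

section
/- The one-dimensional Skorokhod map Γ₁ defined by Γ₁(y)(t) = y(t) - min(0, inf_{0≤s≤t} y(s)) is Lipschitz with constant 2 in the supremum norm: for continuous y₁, y₂ with y₁(0), y₂(0) ≥ 0, sup_{t≥0} |Γ₁(y₁)(t) - Γ₁(y₂)(t)| ≤ 2 sup_{t≥0} |y₁(t) - y₂(t)|. -/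
open Set

/-- The one-dimensional Skorokhod map. -/
noncomputable def Gamma1 (y : ℝ → ℝ) (t : ℝ) : ℝ :=
  y t - min 0 (sInf (y '' Set.Icc 0 t))

lemma inf_le_inf_add (y₁ y₂ : ℝ → ℝ) (hy₁ : Continuous y₁) (hy₂ : Continuous y₂) (M t : ℝ)
    (ht : 0 ≤ t) (hM : ∀ s : ℝ, 0 ≤ s → |y₁ s - y₂ s| ≤ M) :
    sInf (y₁ '' Set.Icc 0 t) ≤ sInf (y₂ '' Set.Icc 0 t) + M := by
  have hne : (Set.Icc (0:ℝ) t).Nonempty := ⟨0, le_refl 0, ht⟩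
  obtain ⟨s, hs, hmin⟩ := isCompact_Icc.exists_isMinOn hne hy₂.continuousOn
  have h2 : sInf (y₂ '' Set.Icc 0 t) = y₂ s := by
    apply le_antisymm
    · exact csInf_le (isCompact_Icc.bddBelow_image hy₂.continuousOn) ⟨s, hs, rfl⟩
    · apply le_csInf (hne.image _)
      rintro b ⟨u, hu, rfl⟩
      exact hmin hu
  have h1 : sInf (y₁ '' Set.Icc 0 t) ≤ y₁ s :=
    csInf_le (isCompact_Icc.bddBelow_image hy₁.continuousOn) ⟨s, hs, rfl⟩
  have := abs_le.1 (hM s hs.1)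
  rw [h2]; linarith

/-- The one-dimensional Skorokhod map is Lipschitz with constant 2 in sup norm. -/
theorem skorokhod_map_lipschitz (y₁ y₂ : ℝ → ℝ) (hy₁ : Continuous y₁) (hy₂ : Continuous y₂)
    (h₁0 : 0 ≤ y₁ 0) (h₂0 : 0 ≤ y₂ 0) (M : ℝ)
    (hM : ∀ t : ℝ, 0 ≤ t → |y₁ t - y₂ t| ≤ M) :
    ∀ t : ℝ, 0 ≤ t → |Gamma1 y₁ t - Gamma1 y₂ t| ≤ 2 * M := by
  intro t ht
  set a := sInf (y₁ '' Set.Icc 0 t)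
  set b := sInf (y₂ '' Set.Icc 0 t)
  have hab : |a - b| ≤ M := by
    have h1 := inf_le_inf_add y₁ y₂ hy₁ hy₂ M t ht hM
    have h2 := inf_le_inf_add y₂ y₁ hy₂ hy₁ M t ht (fun s hs => by
      rw [abs_sub_comm]; exact hM s hs)
    rw [abs_le]; constructor <;> linarith
  have hmin : |min 0 a - min 0 b| ≤ |a - b| := by
    have := abs_min_sub_min_le_max (0:ℝ) a 0 b
    simpa using this
  have := hM t ht
  have : |Gamma1 y₁ t - Gamma1 y₂ t| ≤ |y₁ t - y₂ t| + |min 0 a - min 0 b| := by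
    simp only [Gamma1]
    calc |y₁ t - min 0 a - (y₂ t - min 0 b)|
        = |(y₁ t - y₂ t) + -(min 0 a - min 0 b)| := by ring_nf
      _ ≤ |y₁ t - y₂ t| + |-(min 0 a - min 0 b)| := abs_add_le _ _
      _ = |y₁ t - y₂ t| + |min 0 a - min 0 b| := by rw [abs_neg]
  linarith [hM t ht]
end

section
/- The one-dimensional Skorokhod map is monotone: if y₁, y₂ are continuous with y₁(0), y₂(0) ≥ 0 and y₁(t) ≤ y₂(t) for all t, and additionally y₂ - y₁ is nondecreasing, then Γ₁(y₁)(t) ≤ Γ₁(y₂)(t) for all t ≥ 0. -/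
open Set

/-- Monotonicity of the one-dimensional Skorokhod map. -/
theorem skorokhod_map_monotone (y₁ y₂ : ℝ → ℝ) (hy₁ : Continuous y₁) (hy₂ : Continuous y₂)
    (h₁0 : 0 ≤ y₁ 0) (h₂0 : 0 ≤ y₂ 0)
    (hle : ∀ t : ℝ, y₁ t ≤ y₂ t)
    (hmono : Monotone (fun t => y₂ t - y₁ t)) :
    ∀ t : ℝ, 0 ≤ t → Gamma1 y₁ t ≤ Gamma1 y₂ t := by
  intro t ht
  have hSne : (Set.Icc (0:ℝ) t).Nonempty := ⟨0, by simp [ht]⟩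
  have hSc : IsCompact (Set.Icc (0:ℝ) t) := isCompact_Icc
  obtain ⟨u, huS, hu⟩ := hSc.exists_isMinOn hSne hy₁.continuousOn
  obtain ⟨v, hvS, hv⟩ := hSc.exists_isMinOn hSne hy₂.continuousOn
  have hm₁ : sInf (y₁ '' Set.Icc 0 t) = y₁ u := by
    apply le_antisymm
    · exact csInf_le (hSc.bddBelow_image hy₁.continuousOn) ⟨u, huS, rfl⟩
    · exact le_csInf (hSne.image _) (by rintro _ ⟨s, hs, rfl⟩; exact hu hs)
  have hm₂ : sInf (y₂ '' Set.Icc 0 t) = y₂ v := by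
    apply le_antisymm
    · exact csInf_le (hSc.bddBelow_image hy₂.continuousOn) ⟨v, hvS, rfl⟩
    · exact le_csInf (hSne.image _) (by rintro _ ⟨s, hs, rfl⟩; exact hv hs)
  simp only [Gamma1, hm₁, hm₂]
  have hmt : y₂ u - y₁ u ≤ y₂ t - y₁ t := hmono huS.2
  rcases le_or_gt 0 (y₁ u) with h1 | h1
  · have h2 : 0 ≤ y₂ v := le_trans (le_trans h1 (hu hvS)) (hle v)
    rw [min_eq_left h1, min_eq_left h2]
    simpa using hle t
  · rw [min_eq_right h1.le]
    rcases le_or_gt 0 (y₂ v) with h2 | h2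
    · rw [min_eq_left h2]
      have : 0 ≤ y₂ u := le_trans h2 (hv huS)
      linarith
    · rw [min_eq_right h2.le]
      have : y₂ v ≤ y₂ u := hv huS
      linarith
end

section
/- Let d ≥ 1 and p ∈ (1/2, 1), q = 1 - p. Let P be the d×d matrix with P_{i,i+1} = p, P_{i,i-1} = q, and all other entries 0, and let R = I - Pᵀ. Then R is invertible and for 1 ≤ i ≤ j ≤ d, (R⁻¹)_{ij} = ((q/p)^{j-i}/(p-q)) · (1 - (q/p)^i)(1 - (q/p)^{d+1-j})/(1 - (q/p)^{d+1}), while for 1 ≤ j < i ≤ d, (R⁻¹)_{ij} = ((p/q)^{i-j}/(p-q)) · ((p/q)^j - 1)((p/q)^{d+1-i} - 1)/((p/q)^{d+1} - 1). -/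
open Matrix

private noncomputable def gAux (d : ℕ) (p r : ℝ) (a c : ℕ) : ℝ :=
  if a ≤ c then
    r ^ (c - a) * ((1 - r ^ a) * (1 - r ^ (d + 1 - c)) / ((p - (1 - p)) * (1 - r ^ (d + 1))))
  else (1 - r ^ c) * (1 - r ^ (d + 1 - a)) / ((p - (1 - p)) * (1 - r ^ (d + 1)))

private lemma gAux_zero (d : ℕ) (p r : ℝ) (c : ℕ) : gAux d p r 0 c = 0 := by
  simp [gAux]

private lemma gAux_top (d : ℕ) (p r : ℝ) (c : ℕ) (h : c ≤ d) : gAux d p r (d+1) c = 0 := by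
  unfold gAux
  rw [if_neg (by omega), Nat.sub_self]
  simp

private lemma gAux_ge (d : ℕ) (p r : ℝ) {a c : ℕ} (h : c ≤ a) :
    gAux d p r a c = (1 - r ^ c) * (1 - r ^ (d + 1 - a)) / ((p - (1 - p)) * (1 - r ^ (d + 1))) := by
  unfold gAux
  split
  · have hac : a = c := le_antisymm ‹_› h
    subst hac
    rw [Nat.sub_self]
    ring
  · rfl

private lemma gAux_key (d : ℕ) (p r : ℝ) (h : 1 - p = p * r)
    (hD : (p - (1 - p)) * (1 - r ^ (d + 1)) ≠ 0)
    (b c : ℕ) (hb : b + 1 ≤ d) (hc : c + 1 ≤ d) :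
    gAux d p r (b+1) (c+1) - (p * gAux d p r b (c+1) + (1-p) * gAux d p r (b+2) (c+1))
      = if b = c then 1 else 0 := by
  rcases lt_trichotomy b c with hlt | heq | hgt
  · rw [if_neg hlt.ne]
    obtain ⟨t, ht⟩ : ∃ t, c = b + t + 1 := ⟨c - b - 1, by omega⟩
    subst ht
    unfold gAux
    rw [if_pos (by omega), if_pos (by omega), if_pos (by omega)]
    have e1 : b + t + 1 + 1 - (b + 1) = t + 1 := by omega
    have e2 : b + t + 1 + 1 - b = t + 2 := by omega
    have e3 : b + t + 1 + 1 - (b + 2) = t := by omega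
    rw [e1, e2, e3]
    have hz : r^(t+1)*(1-r^(b+1)) - p*(r^(t+2)*(1-r^b)) - (1-p)*(r^t*(1-r^(b+2))) = 0 := by
      linear_combination (r^(t+1) - r^t) * h
    calc r ^ (t + 1) * ((1 - r ^ (b + 1)) * (1 - r ^ (d + 1 - (b + t + 1 + 1))) /
            ((p - (1 - p)) * (1 - r ^ (d + 1)))) -
          (p * (r ^ (t + 2) * ((1 - r ^ b) * (1 - r ^ (d + 1 - (b + t + 1 + 1))) /
            ((p - (1 - p)) * (1 - r ^ (d + 1))))) +
          (1 - p) * (r ^ t * ((1 - r ^ (b + 2)) * (1 - r ^ (d + 1 - (b + t + 1 + 1))) /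
            ((p - (1 - p)) * (1 - r ^ (d + 1))))))
        = (r^(t+1)*(1-r^(b+1)) - p*(r^(t+2)*(1-r^b)) - (1-p)*(r^t*(1-r^(b+2)))) *
            ((1 - r ^ (d + 1 - (b + t + 1 + 1))) / ((p - (1 - p)) * (1 - r ^ (d + 1)))) := by
          ring
      _ = 0 := by rw [hz]; ring
  · subst heq
    rw [if_pos rfl]
    obtain ⟨e, he⟩ : ∃ e, d = b + e + 1 := ⟨d - b - 1, by omega⟩
    subst he
    unfold gAux
    rw [if_pos le_rfl, if_pos (by omega), if_neg (by omega), Nat.sub_self]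
    have e1 : b + 1 - b = 1 := by omega
    have e2 : b + e + 1 + 1 - (b + 1) = e + 1 := by omega
    have e3 : b + e + 1 + 1 - (b + 2) = e := by omega
    have e4 : b + e + 1 + 1 = b + e + 2 := by omega
    rw [e1, e2, e3, e4]
    have hz : (1-r^(b+1))*(1-r^(e+1)) - p*(r*((1-r^b)*(1-r^(e+1)))) -
        (1-p)*((1-r^(b+1))*(1-r^e)) = (p-(1-p))*(1-r^(b+e+2)) := by
      linear_combination ((1-r^(b+1))*(r^e - r^(e+1)) + (1-r^(b+e+2))) * h
    rw [e4] at hD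
    calc r ^ 0 * ((1 - r ^ (b + 1)) * (1 - r ^ (e + 1)) / ((p - (1 - p)) * (1 - r ^ (b + e + 2)))) -
          (p * (r ^ 1 * ((1 - r ^ b) * (1 - r ^ (e + 1)) / ((p - (1 - p)) * (1 - r ^ (b + e + 2))))) +
           (1 - p) * ((1 - r ^ (b + 1)) * (1 - r ^ e) / ((p - (1 - p)) * (1 - r ^ (b + e + 2)))))
        = ((1-r^(b+1))*(1-r^(e+1)) - p*(r*((1-r^b)*(1-r^(e+1)))) -
            (1-p)*((1-r^(b+1))*(1-r^e))) / ((p - (1 - p)) * (1 - r ^ (b + e + 2))) := by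
          ring
      _ = 1 := by rw [hz]; exact div_self hD
  · rw [if_neg hgt.ne']
    rw [gAux_ge d p r (by omega), gAux_ge d p r (by omega), gAux_ge d p r (by omega)]
    obtain ⟨e, he⟩ : ∃ e, d = b + e + 1 := ⟨d - b - 1, by omega⟩
    subst he
    have e1 : b + e + 1 + 1 - (b + 1) = e + 1 := by omega
    have e2 : b + e + 1 + 1 - b = e + 2 := by omega
    have e3 : b + e + 1 + 1 - (b + 2) = e := by omega
    rw [e1, e2, e3]
    have hz : (1-r^(e+1)) - p*(1-r^(e+2)) - (1-p)*(1-r^e) = 0 := by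
      linear_combination (r^e - r^(e+1)) * h
    calc (1 - r ^ (c + 1)) * (1 - r ^ (e + 1)) / ((p - (1 - p)) * (1 - r ^ (b + e + 1 + 1))) -
          (p * ((1 - r ^ (c + 1)) * (1 - r ^ (e + 2)) / ((p - (1 - p)) * (1 - r ^ (b + e + 1 + 1)))) +
           (1 - p) * ((1 - r ^ (c + 1)) * (1 - r ^ e) / ((p - (1 - p)) * (1 - r ^ (b + e + 1 + 1)))))
        = ((1-r^(e+1)) - p*(1-r^(e+2)) - (1-p)*(1-r^e)) *
            ((1 - r ^ (c + 1)) / ((p - (1 - p)) * (1 - r ^ (b + e + 1 + 1)))) := by ring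
      _ = 0 := by rw [hz]; ring

private lemma convertLower (r s c2 : ℝ) (hrs : s * r = 1) (hc : c2 ≠ 0)
    (n1 n2 m : ℕ) (hd1 : 1 - r ^ (n1 + n2 + m) ≠ 0) :
    (1 - r ^ n1) * (1 - r ^ n2) / (c2 * (1 - r ^ (n1 + n2 + m))) =
      s ^ m / c2 * ((s ^ n1 - 1) * (s ^ n2 - 1) / (s ^ (n1 + n2 + m) - 1)) := by
  have hs : s ≠ 0 := by
    intro h; rw [h, zero_mul] at hrs; exact one_ne_zero hrs.symm
  have hN : ∀ n : ℕ, s ^ n * r ^ n = 1 := by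
    intro n; rw [← mul_pow, hrs, one_pow]
  have e : ∀ n : ℕ, s ^ n - 1 = s ^ n * (1 - r ^ n) := by
    intro n; linear_combination hN n
  rw [e n1, e n2, e (n1 + n2 + m)]
  rw [show s ^ (n1 + n2 + m) = s ^ n1 * s ^ n2 * s ^ m by rw [pow_add, pow_add]]
  rw [div_mul_div_comm]
  rw [div_eq_div_iff (mul_ne_zero hc hd1)
    (mul_ne_zero hc (mul_ne_zero (mul_ne_zero (mul_ne_zero (pow_ne_zero _ hs)
      (pow_ne_zero _ hs)) (pow_ne_zero _ hs)) hd1))]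
  ring

private lemma sum_ite_val {d : ℕ} (c : ℕ) (f : Fin d → ℝ) :
    ∑ j : Fin d, (if (j : ℕ) = c then f j else 0) = if hc : c < d then f ⟨c, hc⟩ else 0 := by
  by_cases hc : c < d
  · rw [dif_pos hc, Finset.sum_eq_single (⟨c, hc⟩ : Fin d)]
    · simp
    · intro j _ hj
      rw [if_neg]
      simpa [Fin.ext_iff] using hj
    · simp
  · rw [dif_neg hc, Finset.sum_eq_zero]
    intro j _
    have := j.isLt
    rw [if_neg]
    omega

/-- Explicit inverse of the reflection matrix of the asymmetric Atlas model gap process.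
Indices of `Fin d` are 0-based; `i : Fin d` corresponds to the 1-based index `i.val + 1`. -/
theorem asymmetric_atlas_inverse (d : ℕ) (hd : 1 ≤ d) (p q : ℝ)
    (hp : 1 / 2 < p) (hp1 : p < 1) (hq : q = 1 - p)
    (P : Matrix (Fin d) (Fin d) ℝ)
    (hP : ∀ i j : Fin d, P i j =
      if j.val = i.val + 1 then p else if j.val + 1 = i.val then q else 0)
    (R : Matrix (Fin d) (Fin d) ℝ) (hR : R = 1 - Pᵀ) :
    IsUnit R ∧
    (∀ i j : Fin d, i ≤ j →
      R⁻¹ i j = ((q / p) ^ (j.val - i.val) / (p - q)) *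
        ((1 - (q / p) ^ (i.val + 1)) * (1 - (q / p) ^ (d - j.val)) /
          (1 - (q / p) ^ (d + 1)))) ∧
    (∀ i j : Fin d, j < i →
      R⁻¹ i j = ((p / q) ^ (i.val - j.val) / (p - q)) *
        (((p / q) ^ (j.val + 1) - 1) * ((p / q) ^ (d - i.val) - 1) /
          ((p / q) ^ (d + 1) - 1))) := by
  subst hq
  subst hR
  have hp0 : (0:ℝ) < p := by linarith
  have hq0 : (0:ℝ) < 1 - p := by linarith
  have hqp : 1 - p < p := by linarith
  set r : ℝ := (1 - p) / p with hrdef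
  have hr0 : 0 < r := div_pos hq0 hp0
  have hr1 : r < 1 := (div_lt_one hp0).2 hqp
  have h2p : p - (1 - p) ≠ 0 := ne_of_gt (by linarith)
  have hrpow : r ^ (d + 1) < 1 := pow_lt_one₀ hr0.le hr1 (by omega)
  have hd1 : (1:ℝ) - r ^ (d + 1) ≠ 0 := ne_of_gt (by linarith)
  have hD : (p - (1 - p)) * (1 - r ^ (d + 1)) ≠ 0 := mul_ne_zero h2p hd1
  have hpr : 1 - p = p * r := by rw [hrdef]; field_simp
  set B : Matrix (Fin d) (Fin d) ℝ :=
    Matrix.of (fun i k : Fin d => gAux d p r (i.1 + 1) (k.1 + 1)) with hBdef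
  have hB : ∀ i k : Fin d, B i k = gAux d p r (i.1 + 1) (k.1 + 1) := fun _ _ => rfl
  have hRB : (1 - Pᵀ) * B = 1 := by
    ext i k
    rw [Matrix.mul_apply]
    have step : ∀ j : Fin d, (1 - Pᵀ) i j * B j k =
        (if i = j then B j k else 0) -
        ((if (j:ℕ) + 1 = (i:ℕ) then p * B j k else 0) +
         (if (j:ℕ) = (i:ℕ) + 1 then (1 - p) * B j k else 0)) := by
      intro j
      rw [Matrix.sub_apply, Matrix.one_apply, Matrix.transpose_apply, hP]
      simp only [Fin.ext_iff]
      split_ifs <;> first | ring1 | (exfalso; omega)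
    rw [Finset.sum_congr rfl (fun j _ => step j), Finset.sum_sub_distrib,
      Finset.sum_add_distrib, Finset.sum_ite_eq]
    have hsum1 : ∑ j : Fin d, (if (j:ℕ) + 1 = (i:ℕ) then p * B j k else 0)
        = p * gAux d p r i.1 (k.1 + 1) := by
      by_cases h0 : (i:ℕ) = 0
      · rw [h0, gAux_zero, mul_zero]
        apply Finset.sum_eq_zero
        intro j _
        rw [if_neg]
        omega
      · simp only [show ∀ j : Fin d, ((j:ℕ) + 1 = (i:ℕ)) ↔ ((j:ℕ) = (i:ℕ) - 1) from
          fun j => by omega]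
        rw [sum_ite_val, dif_pos (show (i:ℕ) - 1 < d by have := i.isLt; omega)]
        rw [hB]
        rw [show (i:ℕ) - 1 + 1 = (i:ℕ) by omega]
    have hsum2 : ∑ j : Fin d, (if (j:ℕ) = (i:ℕ) + 1 then (1 - p) * B j k else 0)
        = (1 - p) * gAux d p r (i.1 + 2) (k.1 + 1) := by
      rw [sum_ite_val]
      by_cases h : (i:ℕ) + 1 < d
      · rw [dif_pos h, hB]
      · rw [dif_neg h]
        rw [show (i:ℕ) + 2 = d + 1 by have := i.isLt; omega]
        rw [gAux_top d p r _ (by have := k.isLt; omega), mul_zero]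
    rw [hsum1, hsum2, if_pos (Finset.mem_univ i), hB, Matrix.one_apply]
    rw [gAux_key d p r hpr hD i.1 k.1 i.isLt k.isLt]
    simp [Fin.ext_iff]
  have hBR : B * (1 - Pᵀ) = 1 := mul_eq_one_comm.mp hRB
  have hUnit : IsUnit (1 - Pᵀ) := ⟨⟨1 - Pᵀ, B, hRB, hBR⟩, rfl⟩
  have hinv : (1 - Pᵀ)⁻¹ = B := Matrix.inv_eq_right_inv hRB
  refine ⟨hUnit, ?_, ?_⟩
  · intro i j hij
    have hij' : (i:ℕ) ≤ (j:ℕ) := hij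
    rw [hinv, hB]
    unfold gAux
    rw [if_pos (by omega), show j.1 + 1 - (i.1 + 1) = j.1 - i.1 by omega,
      show d + 1 - (j.1 + 1) = d - j.1 by omega]
    field_simp
  · intro i j hji
    have hji' : (j:ℕ) < (i:ℕ) := hji
    rw [hinv, hB]
    rw [gAux_ge d p r (show j.1 + 1 ≤ i.1 + 1 by omega),
      show d + 1 - (i.1 + 1) = d - i.1 by omega]
    have hsum : (j.1 + 1) + (d - i.1) + (i.1 - j.1) = d + 1 := by have := i.isLt; omega
    rw [← hsum]
    exact convertLower r (p / (1 - p)) (p - (1 - p))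
      (by rw [hrdef]; field_simp) h2p _ _ _ (by rw [hsum]; exact hd1)
end

section
/- Let p ∈ (1/2, 1), q = 1 - p, d ≥ 1, and let b⁽ᵏ⁾ᵢ = ((p/q)^{i-1}/(p-q)) · ((p/q) - 1)((p/q)^{k+1-i} - 1)/((p/q)^{k+1} - 1) for 1 ≤ i ≤ k ≤ d. Then for all such i, k, b⁽ᵏ⁾ᵢ ≥ (p - q)/p² > 0 and b⁽ᵏ⁾ᵢ ≤ p/(p - q). -/
/-!
Write `R = p / q > 1`; since `p + q = 1`, `1 / q = R + 1` and
`b⁽ᵏ⁾ᵢ = (R + 1) R^(i-1) (R^(k+1-i) - 1) / (R^(k+1) - 1)`, while the two bounds become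
`(R² - 1) / R²` and `R / (R - 1)`. After clearing denominators each bound is an inequality
`R^a + R^b ≤ R^c + R^d` with `a ≤ c` and `b ≤ d`, which holds because `R ≥ 1`.
-/

namespace AsymmetricAtlas

/-- The coordinate `i = j + 1` of `b⁽ᵏ⁾` for `k = j + m`, as a function of `R = p / q`. -/
noncomputable def driftCoord (R : ℝ) (j m : ℕ) : ℝ :=
  (R + 1) * R ^ j * (R ^ m - 1) / (R ^ (j + m + 1) - 1)

variable {R : ℝ}

lemma sq_sub_one_div_sq_le_driftCoord (hR : 1 < R) (j : ℕ) {m : ℕ} (hm : 1 ≤ m) :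
    (R ^ 2 - 1) / R ^ 2 ≤ driftCoord R j m := by
  have key : R ^ (j + 2) + 1 ≤ R ^ (j + m + 1) + R :=
    add_le_add (pow_le_pow_right₀ hR.le (by omega)) hR.le
  rw [driftCoord, div_le_div_iff₀ (by positivity) (sub_pos.2 (one_lt_pow₀ hR (by omega)))]
  linear_combination (R + 1) * key

lemma driftCoord_le_div_sub_one (hR : 1 < R) {j m : ℕ} (hjm : j + m ≠ 0) :
    driftCoord R j m ≤ R / (R - 1) := by
  have key : R ^ j + R ≤ R ^ (j + 2) + R ^ (j + m) :=
    add_le_add (pow_le_pow_right₀ hR.le (by omega)) (le_self_pow₀ hR.le hjm)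
  rw [driftCoord, div_le_div_iff₀ (sub_pos.2 (one_lt_pow₀ hR (by omega))) (sub_pos.2 hR)]
  linear_combination key

variable {p q : ℝ}

lemma sub_div_sq_eq_of_add_eq_one (hp : p ≠ 0) (hq : q ≠ 0) (hpq : p + q = 1) :
    (p - q) / p ^ 2 = ((p / q) ^ 2 - 1) / (p / q) ^ 2 := by
  field_simp
  linear_combination (q - p) * hpq

lemma div_sub_eq_div_div_sub_one (hq : q ≠ 0) : p / (p - q) = p / q / (p / q - 1) := by
  rw [div_sub_one hq, div_div_div_cancel_right₀ hq]

lemma drift_eq_driftCoord (hq : q ≠ 0) (hpq : p + q = 1) (hpq' : p - q ≠ 0) {i k : ℕ}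
    (hi : 1 ≤ i) (hik : i ≤ k) :
    (p / q) ^ (i - 1) / (p - q) *
        ((p / q - 1) * ((p / q) ^ (k + 1 - i) - 1) / ((p / q) ^ (k + 1) - 1)) =
      driftCoord (p / q) (i - 1) (k + 1 - i) := by
  have hk : k + 1 = i - 1 + (k + 1 - i) + 1 := by omega
  have hR_sub : p / q - 1 = (p - q) / q := by field_simp
  have hR_add : p / q + 1 = 1 / q := by field_simp; linear_combination hpq
  rw [driftCoord, hR_add, hR_sub, ← hk]
  field_simp

end AsymmetricAtlas

theorem asymmetric_atlas_drift_bounds_general (p q : ℝ)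
    (hp : 1 / 2 < p) (hp1 : p < 1) (hq : q = 1 - p)
    (i k : ℕ) (hi : 1 ≤ i) (hik : i ≤ k)
    (b : ℝ)
    (hb : b = ((p / q) ^ (i - 1) / (p - q)) *
      ((p / q - 1) * ((p / q) ^ (k + 1 - i) - 1) / ((p / q) ^ (k + 1) - 1))) :
    (p - q) / p ^ 2 ≤ b ∧ 0 < (p - q) / p ^ 2 ∧ b ≤ p / (p - q) := by
  have hq0 : 0 < q := by linarith
  have hpq : p + q = 1 := by linarith
  have hpq_pos : 0 < p - q := by linarith
  have hR : 1 < p / q := (one_lt_div hq0).2 (by linarith)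
  rw [hb, AsymmetricAtlas.drift_eq_driftCoord hq0.ne' hpq hpq_pos.ne' hi hik,
    AsymmetricAtlas.sub_div_sq_eq_of_add_eq_one (by linarith) hq0.ne' hpq,
    AsymmetricAtlas.div_sub_eq_div_div_sub_one hq0.ne']
  exact ⟨AsymmetricAtlas.sq_sub_one_div_sq_le_driftCoord hR _ (by omega),
    div_pos (sub_pos.2 (one_lt_pow₀ hR two_ne_zero)) (by positivity),
    AsymmetricAtlas.driftCoord_le_div_sub_one hR (by omega)⟩

/-- Bounds on the renormalized drift vector of the projected asymmetric Atlas gap process. -/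
theorem asymmetric_atlas_drift_bounds (d : ℕ) (hd : 1 ≤ d) (p q : ℝ)
    (hp : 1 / 2 < p) (hp1 : p < 1) (hq : q = 1 - p)
    (i k : ℕ) (hi : 1 ≤ i) (hik : i ≤ k) (hkd : k ≤ d)
    (b : ℝ)
    (hb : b = ((p / q) ^ (i - 1) / (p - q)) *
      ((p / q - 1) * ((p / q) ^ (k + 1 - i) - 1) / ((p / q) ^ (k + 1) - 1))) :
    (p - q) / p ^ 2 ≤ b ∧ 0 < (p - q) / p ^ 2 ∧ b ≤ p / (p - q) :=
  asymmetric_atlas_drift_bounds_general p q hp hp1 hq i k hi hik b hb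
end

section
/- Let λ : ℕ → ℝ be nonnegative with limsup_{i→∞} λ_i · (log log i)/i = 0. Then limsup_{d→∞} (log log d / log d) ∑_{i=1}^d λ_i/i² = 0. -/
/-!
Write `λᵢ / i² = (λᵢ log log i / i) · wᵢ` with `wᵢ = 1 / (i log log i)` (with `max 1` in the
denominator, so that the weight stays nonnegative for small `i`, where `log log i ≤ 0`). The
coefficients tend to `0`, so it suffices that `∑_{i ≤ d} wᵢ = O(log d / log log d)`, by the usual
argument for weighted averages. For that bound split the sum at `t = exp (log d / log log d)`:
below `t` use `wᵢ ≤ 1 / i`, which contributes `log t = log d / log log d`; above `t` use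
`log log i ≥ log log t = log log d - log log log d ≥ (log log d) / 2`, which contributes at most
`2 (1 + log d) / log log d`.
-/

open Filter Real Finset Asymptotics

theorem sum_norm_le_sum_range_add_mul_sum {f g : ℕ → ℝ} (hg : 0 ≤ g) {N : ℕ} {δ : ℝ}
    (hδ : 0 ≤ δ) (hN : ∀ i ≥ N, ‖f i‖ ≤ δ * g i) (s : Finset ℕ) :
    ∑ i ∈ s, ‖f i‖ ≤ ∑ i ∈ range N, ‖f i‖ + δ * ∑ i ∈ s, g i := by
  rw [← sum_filter_add_sum_filter_not s (· < N), mul_sum]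
  gcongr
  · exact fun i hi => mem_range.2 (mem_filter.1 hi).2
  · calc ∑ i ∈ s with ¬i < N, ‖f i‖ ≤ ∑ i ∈ s with ¬i < N, δ * g i :=
          sum_le_sum fun i hi => hN i (not_lt.1 (mem_filter.1 hi).2)
      _ ≤ ∑ i ∈ s, δ * g i :=
          sum_le_sum_of_subset_of_nonneg (filter_subset _ _) fun i _ _ => mul_nonneg hδ (hg i)

theorem tendsto_mul_sum_of_isLittleO {α : Type*} {l : Filter α} {f g : ℕ → ℝ} {c : α → ℝ}
    {s : α → Finset ℕ} (hfg : f =o[atTop] g) (hg : 0 ≤ g) (hc : Tendsto c l (nhds 0))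
    (hcg : (fun a => c a * ∑ i ∈ s a, g i) =O[l] fun _ => (1 : ℝ)) :
    Tendsto (fun a => c a * ∑ i ∈ s a, f i) l (nhds 0) := by
  obtain ⟨C, hC, hCg⟩ := hcg.exists_pos
  rw [Metric.tendsto_nhds]
  intro ε hε
  have hδ : 0 < ε / (2 * C) := by positivity
  obtain ⟨N, hN⟩ := eventually_atTop.1 (hfg.bound hδ)
  have hN' : ∀ i ≥ N, ‖f i‖ ≤ ε / (2 * C) * g i := fun i hi => by
    simpa [Real.norm_of_nonneg (hg i)] using hN i hi
  have hcK : Tendsto (fun a => |c a| * ∑ i ∈ range N, ‖f i‖) l (nhds 0) := by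
    simpa using hc.abs.mul_const (∑ i ∈ range N, ‖f i‖)
  filter_upwards [hCg.bound, hcK.eventually (gt_mem_nhds (half_pos hε))] with a hbound hsmall
  have hsum_g : 0 ≤ ∑ i ∈ s a, g i := sum_nonneg fun i _ => hg i
  rw [norm_one, mul_one, Real.norm_eq_abs, abs_mul, abs_of_nonneg hsum_g] at hbound
  rw [dist_zero_right, norm_mul, Real.norm_eq_abs]
  calc |c a| * ‖∑ i ∈ s a, f i‖
      ≤ |c a| * (∑ i ∈ range N, ‖f i‖ + ε / (2 * C) * ∑ i ∈ s a, g i) := by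
        gcongr
        exact (norm_sum_le _ _).trans (sum_norm_le_sum_range_add_mul_sum hg hδ.le hN' _)
    _ = |c a| * ∑ i ∈ range N, ‖f i‖ + ε / (2 * C) * (|c a| * ∑ i ∈ s a, g i) := by ring
    _ < ε / 2 + ε / (2 * C) * C := add_lt_add_of_lt_of_le hsmall (by gcongr)
    _ = ε := by field_simp; ring

theorem sum_inv_le_one_add_log {s : Finset ℕ} {y : ℝ} (hy : 1 ≤ y)
    (hs : ∀ i ∈ s, 1 ≤ i ∧ (i : ℝ) ≤ y) : ∑ i ∈ s, (i : ℝ)⁻¹ ≤ 1 + log y := by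
  have hsub : s ⊆ Icc 1 ⌊y⌋₊ := fun i hi =>
    mem_Icc.2 ⟨(hs i hi).1, Nat.le_floor (hs i hi).2⟩
  calc ∑ i ∈ s, (i : ℝ)⁻¹ ≤ ∑ i ∈ Icc 1 ⌊y⌋₊, (i : ℝ)⁻¹ :=
        sum_le_sum_of_subset_of_nonneg hsub fun i _ _ => by positivity
    _ = harmonic ⌊y⌋₊ := by simp [harmonic_eq_sum_Icc]
    _ ≤ 1 + log y := harmonic_floor_le_one_add_log y hy

theorem sum_inv_mul_max_one_log_log_le {d : ℕ} (hd : 1 ≤ d) {t : ℝ} (ht : exp 1 < t) :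
    ∑ i ∈ Icc 1 d, ((i : ℝ) * max 1 (log (log i)))⁻¹ ≤ 1 + log t + (1 + log d) / log (log t) := by
  have ht0 : 0 < t := (exp_pos 1).trans ht
  have hlogt : 1 < log t := (lt_log_iff_exp_lt ht0).2 ht
  have hloglogt : 0 < log (log t) := log_pos hlogt
  rw [← sum_filter_add_sum_filter_not _ (fun i : ℕ => (i : ℝ) ≤ t), div_eq_inv_mul]
  gcongr
  · calc ∑ i ∈ Icc 1 d with ((i : ℕ) : ℝ) ≤ t, ((i : ℝ) * max 1 (log (log i)))⁻¹
        ≤ ∑ i ∈ Icc 1 d with ((i : ℕ) : ℝ) ≤ t, (i : ℝ)⁻¹ := by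
          refine sum_le_sum fun i hi => ?_
          simp only [mem_filter, mem_Icc] at hi
          have hi : 0 < (i : ℝ) := by exact_mod_cast hi.1.1
          exact inv_anti₀ hi (le_mul_of_one_le_right hi.le (le_max_left _ _))
      _ ≤ 1 + log t := by
          refine sum_inv_le_one_add_log (by linarith [add_one_le_exp (1 : ℝ)]) fun i hi => ?_
          simp only [mem_filter, mem_Icc] at hi
          exact ⟨hi.1.1, hi.2⟩
  · calc ∑ i ∈ Icc 1 d with ¬((i : ℕ) : ℝ) ≤ t, ((i : ℝ) * max 1 (log (log i)))⁻¹
        ≤ ∑ i ∈ Icc 1 d with ¬((i : ℕ) : ℝ) ≤ t, (log (log t))⁻¹ * (i : ℝ)⁻¹ := by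
          refine sum_le_sum fun i hi => ?_
          simp only [mem_filter, not_le] at hi
          have hi0 : 0 < (i : ℝ) := ht0.trans hi.2
          rw [← mul_inv, mul_comm]
          gcongr
          exact (log_le_log (by linarith) (log_le_log ht0 hi.2.le)).trans (le_max_right _ _)
      _ ≤ (log (log t))⁻¹ * (1 + log d) := by
          rw [← mul_sum]
          gcongr
          refine sum_inv_le_one_add_log (y := d) (by exact_mod_cast hd) fun i hi => ?_
          simp only [mem_filter, mem_Icc] at hi
          exact ⟨hi.1.1, by exact_mod_cast hi.1.2⟩

theorem eventually_log_le_half : ∀ᶠ x : ℝ in atTop, log x ≤ x / 2 := by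
  filter_upwards [isLittleO_log_id_atTop.bound (by norm_num : (0 : ℝ) < 1 / 2),
    eventually_ge_atTop 0] with x hx hx0
  rw [norm_eq_abs, id, norm_of_nonneg hx0] at hx
  linarith [le_abs_self (log x)]

theorem isBigO_log_log_div_log_mul_sum :
    (fun d : ℕ => log (log d) / log d * ∑ i ∈ Icc 1 d, ((i : ℝ) * max 1 (log (log i)))⁻¹)
      =O[atTop] fun _ => (1 : ℝ) := by
  have hlog : Tendsto (fun d : ℕ => log d) atTop atTop :=
    tendsto_log_atTop.comp tendsto_natCast_atTop_atTop
  have hloglog := tendsto_log_atTop.comp hlog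
  refine IsBigO.of_bound 6 ?_
  filter_upwards [hlog.eventually eventually_log_le_half, hloglog.eventually eventually_log_le_half,
    hlog.eventually_ge_atTop 1, hloglog.eventually_gt_atTop 0, eventually_ge_atTop 1]
    with d hba hlogb ha hb hd
  simp only [Function.comp_apply] at hba hlogb hb
  set a := log d
  set b := log a
  have hab : 2 ≤ a / b := by rw [le_div_iff₀ hb]; linarith
  have hloglogt : log (log (exp (a / b))) = b - log b := by
    rw [log_exp, log_div (by positivity) hb.ne']
  have hsum := sum_inv_mul_max_one_log_log_le hd (t := exp (a / b)) (by gcongr; linarith)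
  rw [hloglogt, log_exp] at hsum
  rw [norm_one, mul_one, norm_of_nonneg (by positivity)]
  calc b / a * ∑ i ∈ Icc 1 d, ((i : ℝ) * max 1 (log (log i)))⁻¹
      ≤ b / a * (1 + a / b + (1 + a) / (b / 2)) := by
        gcongr
        refine hsum.trans (by gcongr; linarith)
    _ = b / a + 3 + 2 / a := by field_simp; ring
    _ ≤ 6 := by
        have : b / a ≤ 1 / 2 := by rw [div_le_iff₀ (by linarith)]; linarith
        have : 2 / a ≤ 2 := by rw [div_le_iff₀ (by linarith)]; linarith
        linarith

theorem aexp_condition_general (lam : ℕ → ℝ)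
    (h : Tendsto (fun i : ℕ => lam i * Real.log (Real.log i) / i) atTop (nhds 0)) :
    Tendsto (fun d : ℕ =>
      (Real.log (Real.log d) / Real.log d) *
        ∑ i ∈ Finset.Icc 1 d, lam i / (i : ℝ) ^ 2) atTop (nhds 0) := by
  have hlog : Tendsto (fun d : ℕ => log d) atTop atTop :=
    tendsto_log_atTop.comp tendsto_natCast_atTop_atTop
  have hloglog := tendsto_log_atTop.comp hlog
  have hfg : (fun i : ℕ => lam i / (i : ℝ) ^ 2)
      =o[atTop] fun i : ℕ => ((i : ℝ) * max 1 (log (log i)))⁻¹ := by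
    refine (((isLittleO_one_iff ℝ).2 h).mul_isBigO
      (isBigO_refl (fun i : ℕ => ((i : ℝ) * max 1 (log (log i)))⁻¹) atTop)).congr' ?_ (by simp)
    filter_upwards [hloglog.eventually_ge_atTop 1, eventually_ge_atTop 1] with i hi hi1
    simp only [Function.comp_apply] at hi
    have hi0 : (i : ℝ) ≠ 0 := by positivity
    rw [max_eq_right hi]
    field_simp
  exact tendsto_mul_sum_of_isLittleO hfg (fun i => by positivity)
    (isLittleO_log_id_atTop.tendsto_div_nhds_zero.comp hlog) isBigO_log_log_div_log_mul_sum

/-- If λᵢ (log log i)/i → 0 (λ nonnegative), then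
(log log d / log d) ∑_{i=1}^d λᵢ/i² → 0. -/
theorem aexp_condition (lam : ℕ → ℝ) (hnonneg : ∀ i, 0 ≤ lam i)
    (h : Tendsto (fun i : ℕ => lam i * Real.log (Real.log i) / i) atTop (nhds 0)) :
    Tendsto (fun d : ℕ =>
      (Real.log (Real.log d) / Real.log d) *
        ∑ i ∈ Finset.Icc 1 d, lam i / (i : ℝ) ^ 2) atTop (nhds 0) :=
  aexp_condition_general lam h
end

section
/- For a ≥ 0 let π_a = ⊗_{i=1}^∞ Exp(2 + ia) be the product of exponential distributions with rates 2 + ia on ℝ₊^∞. For a ≠ a' (both ≥ 0), the measures π_a and π_{a'} are mutually singular. -/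
/-!
Both measures are infinite products, so they are the `Measure.infinitePi` of their factors and
the events `{x i > tᵢ}` are independent. Take `a < a'`, rates `rᵢ = 2 + (i + 1) a` and
`sᵢ = 2 + (i + 1) a'`, and thresholds `tᵢ = log (i + 1) / rᵢ`. Under `π_a` the events have
probabilities `1 / (i + 1)`, so by the second Borel–Cantelli lemma infinitely many of them occur
almost surely. Under `π_{a'}` their probabilities are `(i + 1) ^ (-sᵢ / rᵢ) ≤ (i + 1) ^ (-c)` with
`c = (2 + a') / (2 + a) > 1`, a summable sequence, so by the first Borel–Cantelli lemma only
finitely many occur almost surely.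
-/

open MeasureTheory ProbabilityTheory

/-- `μ` is the infinite product of the measures `ν i`, characterized via its
finite-dimensional marginals. -/
def IsProductOf (μ : Measure (ℕ → ℝ)) (ν : ℕ → Measure ℝ) : Prop :=
  IsProbabilityMeasure μ ∧
    ∀ s : Finset ℕ, μ.map (fun f (i : s) => f i) = Measure.pi (fun i : s => ν i)

open Real Set Filter
open scoped ENNReal

theorem IsProductOf.eq_infinitePi {μ : Measure (ℕ → ℝ)} {ν : ℕ → Measure ℝ}
    [∀ i, IsProbabilityMeasure (ν i)] (h : IsProductOf μ ν) : μ = Measure.infinitePi ν :=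
  ((Measure.isProjectiveLimit_infinitePi ν).unique h.2).symm

theorem mutuallySingular_of_iIndepSet {Ω : Type*} [MeasurableSpace Ω] {μ ν : Measure Ω}
    {A : ℕ → Set Ω} (hA : ∀ n, MeasurableSet (A n)) (hindep : iIndepSet A μ)
    (hμ : ∑' n, μ (A n) = ∞) (hν : ∑' n, ν (A n) ≠ ∞) : μ ⟂ₘ ν := by
  have := hindep.isProbabilityMeasure
  have hlimsup : MeasurableSet (limsup A atTop) := .measurableSet_limsup hA
  refine ⟨(limsup A atTop)ᶜ, hlimsup.compl, ?_, ?_⟩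
  · rw [prob_compl_eq_one_sub hlimsup, measure_limsup_eq_one hA hindep hμ, tsub_self]
  · rw [compl_compl]
    exact measure_limsup_atTop_eq_zero hν

section InfinitePi

variable {X : ℕ → Type*} [∀ i, MeasurableSpace (X i)]
  {μ ν : ∀ i, Measure (X i)} [∀ i, IsProbabilityMeasure (μ i)] [∀ i, IsProbabilityMeasure (ν i)]
  {B : ∀ i, Set (X i)}

theorem infinitePi_preimage_eval (ρ : ∀ i, Measure (X i)) [∀ i, IsProbabilityMeasure (ρ i)]
    (i : ℕ) {S : Set (X i)} (hS : MeasurableSet S) :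
    Measure.infinitePi ρ ((fun x => x i) ⁻¹' S) = ρ i S :=
  (measurePreserving_eval_infinitePi ρ i).measure_preimage hS.nullMeasurableSet

theorem iIndepSet_preimage_eval_infinitePi (hB : ∀ i, MeasurableSet (B i)) :
    iIndepSet (fun i => (fun x => x i) ⁻¹' B i) (Measure.infinitePi μ) := by
  rw [iIndepSet_iff_meas_biInter fun i => measurable_pi_apply i (hB i)]
  intro s
  have : (⋂ i ∈ s, (fun x : ∀ i, X i => x i) ⁻¹' B i) = Set.pi s B := by ext; simp
  rw [this, Measure.infinitePi_pi _ fun i _ => hB i]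
  exact Finset.prod_congr rfl fun i _ => (infinitePi_preimage_eval μ i (hB i)).symm

theorem infinitePi_mutuallySingular_of_tsum (hB : ∀ i, MeasurableSet (B i))
    (hμ : ∑' i, μ i (B i) = ∞) (hν : ∑' i, ν i (B i) ≠ ∞) :
    Measure.infinitePi μ ⟂ₘ Measure.infinitePi ν := by
  refine mutuallySingular_of_iIndepSet (fun i => measurable_pi_apply i (hB i))
    (iIndepSet_preimage_eval_infinitePi hB) ?_ ?_
  · simpa only [infinitePi_preimage_eval μ _ (hB _)] using hμ
  · simpa only [infinitePi_preimage_eval ν _ (hB _)] using hν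

end InfinitePi

theorem expMeasure_Ioi {r t : ℝ} (hr : 0 < r) (ht : 0 ≤ t) :
    expMeasure r (Ioi t) = ENNReal.ofReal (exp (-(r * t))) := by
  have := isProbabilityMeasure_expMeasure hr
  have hexp : exp (-(r * t)) ≤ 1 := exp_le_one_iff.2 (by nlinarith)
  rw [← compl_Iic, prob_compl_eq_one_sub measurableSet_Iic, ← ofReal_cdf, cdf_expMeasure_eq hr,
    if_pos ht, ← ENNReal.ofReal_one, ← ENNReal.ofReal_sub _ (sub_nonneg.2 hexp), sub_sub_cancel]

theorem tsum_ofReal_inv_natCast_add_one : ∑' n : ℕ, ENNReal.ofReal ((n + 1 : ℝ)⁻¹) = ∞ := by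
  by_contra h
  have hsum : Summable fun n : ℕ => ((n + 1 : ℕ) : ℝ)⁻¹ := by
    simpa [ENNReal.toReal_ofReal, Nat.cast_add_one_pos, le_of_lt] using ENNReal.summable_toReal h
  exact Real.not_summable_natCast_inv ((summable_nat_add_iff 1).1 hsum)

theorem infinitePi_expMeasure_mutuallySingular {r s : ℕ → ℝ} {c : ℝ} (hr : ∀ i, 0 < r i)
    (hc : 1 < c) (hrs : ∀ i, c * r i ≤ s i) :
    Measure.infinitePi (fun i => expMeasure (r i)) ⟂ₘ
      Measure.infinitePi (fun i => expMeasure (s i)) := by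
  have hs : ∀ i, 0 < s i := fun i => (mul_pos (by linarith) (hr i)).trans_le (hrs i)
  have := fun i => isProbabilityMeasure_expMeasure (hr i)
  have := fun i => isProbabilityMeasure_expMeasure (hs i)
  set t : ℕ → ℝ := fun i => log (i + 1) / r i
  have hlog : ∀ i : ℕ, 0 ≤ log (i + 1) := fun i => log_nonneg (by simp)
  have ht : ∀ i, 0 ≤ t i := fun i => div_nonneg (hlog i) (hr i).le
  refine infinitePi_mutuallySingular_of_tsum (B := fun i => Ioi (t i))
    (fun _ => measurableSet_Ioi) ?_ ?_
  · have tail_eq : ∀ i : ℕ, expMeasure (r i) (Ioi (t i)) = ENNReal.ofReal ((i + 1 : ℝ)⁻¹) := by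
      intro i
      rw [expMeasure_Ioi (hr i) (ht i), mul_div_cancel₀ _ (hr i).ne', exp_neg,
        exp_log (by positivity)]
    simpa only [tail_eq] using tsum_ofReal_inv_natCast_add_one
  · have tail_le : ∀ i : ℕ,
        expMeasure (s i) (Ioi (t i)) ≤ ENNReal.ofReal ((i + 1 : ℝ) ^ (-c)) := by
      intro i
      have hratio : c ≤ s i / r i := (le_div_iff₀ (hr i)).2 (hrs i)
      rw [expMeasure_Ioi (hs i) (ht i), rpow_def_of_pos (by positivity)]
      gcongr
      calc log (i + 1) * -c = -(c * log (i + 1)) := by ring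
        _ ≥ -(s i / r i * log (i + 1)) := by gcongr; exact hlog i
        _ = -(s i * t i) := by ring
    have hsum : Summable fun i : ℕ => (i + 1 : ℝ) ^ (-c) := by
      simpa using (summable_nat_add_iff 1).2 (summable_nat_rpow.2 (by linarith))
    exact ne_top_of_le_ne_top hsum.tsum_ofReal_ne_top (ENNReal.tsum_le_tsum tail_le)

/-- For a ≠ a' the stationary measures π_a = ⊗ Exp(2 + i a) and π_{a'} of the infinite
Atlas model are mutually singular. (Coordinate `i : ℕ` is the (i+1)-th gap.) -/
theorem pi_a_mutually_singular (a a' : ℝ) (ha : 0 ≤ a) (ha' : 0 ≤ a') (hne : a ≠ a')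
    (μ ν : Measure (ℕ → ℝ))
    (hμ : IsProductOf μ (fun i => expMeasure (2 + (i + 1) * a)))
    (hν : IsProductOf ν (fun i => expMeasure (2 + (i + 1) * a'))) :
    μ ⟂ₘ ν := by
  wlog hlt : a < a' generalizing a a' μ ν
  · exact (this a' a ha' ha hne.symm ν μ hν hμ (hne.symm.lt_of_le (not_lt.1 hlt))).symm
  have rate_pos (b : ℝ) (hb : 0 ≤ b) (i : ℕ) : 0 < 2 + (i + 1) * b := by positivity
  have := fun i : ℕ => isProbabilityMeasure_expMeasure (rate_pos a ha i)
  have := fun i : ℕ => isProbabilityMeasure_expMeasure (rate_pos a' ha' i)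
  have hc : 1 < (2 + a') / (2 + a) := (one_lt_div (by linarith)).2 (by linarith)
  have ratio (i : ℕ) : (2 + a') / (2 + a) * (2 + (i + 1) * a) ≤ 2 + (i + 1) * a' := by
    rw [div_mul_eq_mul_div, div_le_iff₀ (by linarith)]
    nlinarith [mul_nonneg (Nat.cast_nonneg (α := ℝ) i) (sub_nonneg.2 hlt.le)]
  rw [hμ.eq_infinitePi, hν.eq_infinitePi]
  exact infinitePi_expMeasure_mutuallySingular (rate_pos a ha) hc ratio
end

section
/- Let U ∼ π = ⊗_{i=1}^∞ Exp(2) and for a, a' > 0 define V_{a,i} = (2/(2+ia)) U_i and V_{a',i} = (2/(2+ia')) U_i. Then almost surely limsup_{d→∞} (log d)⁻¹ ∑_{i=1}^d |V_{a,i} - V_{a',i}| < ∞ (the partial sums are O(|a - a'| log d)), and limsup_{d→∞} V_{a',d}/(d V_{a,d}) = 0. -/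
/-!
The scale factors 2/(2 + ia) and 2/(2 + ia') differ by at most 2|a - a'|/(a a' i), so the partial
sums of |V_{a,i} - V_{a',i}| are at most 2|a - a'|/(a a') · ∑_{i ≤ d} U_i / i. Since
E exp(U_i / i) = 2/(2 - 1/i) ≤ exp(1/i), the Chernoff bound together with H_d ≤ 1 + log d gives
P(∑_{i ≤ d} U_i / i ≥ 3 log d) ≤ e / d², which is summable, so by Borel–Cantelli these sums are
almost surely eventually below 3 log d. The second claim holds for every ω: U_d cancels in
V_{a',d} / (d V_{a,d}) = (2 + da) / (d (2 + da')) = O(1/d), unless U_d = 0 and the ratio is 0.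
-/

open MeasureTheory ProbabilityTheory Filter Real Topology

section ExponentialMoments

variable {r s : ℝ}

lemma lintegral_exp_mul_expMeasure (hr : 0 < r) (hs : s < r) :
    ∫⁻ x, ENNReal.ofReal (exp (s * x)) ∂expMeasure r = ENNReal.ofReal (r / (r - s)) := by
  have hdensity : ∀ x, exponentialPDF r x * ENNReal.ofReal (exp (s * x)) =
      (Set.Ici 0).indicator (fun x => ENNReal.ofReal (r * exp ((s - r) * x))) x := by
    intro x
    rcases lt_or_ge x 0 with hx | hx
    · simp [exponentialPDF_of_neg hx, hx]
    · rw [exponentialPDF_of_nonneg hx, Set.indicator_of_mem (Set.mem_Ici.2 hx),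
        ← ENNReal.ofReal_mul (by positivity), mul_assoc, ← exp_add]
      ring_nf
  have hint : IntegrableOn (fun x => r * exp ((s - r) * x)) (Set.Ioi 0) :=
    (integrableOn_exp_mul_Ioi (by linarith) 0).const_mul r
  rw [expMeasure, gammaMeasure, lintegral_withDensity_eq_lintegral_mul _
    (f := gammaPDF 1 r) (measurable_gammaPDFReal 1 r).ennreal_ofReal (by fun_prop)]
  change ∫⁻ x, exponentialPDF r x * _ = _
  rw [lintegral_congr hdensity, lintegral_indicator measurableSet_Ici,
    setLIntegral_congr Ioi_ae_eq_Ici.symm,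
    ← ofReal_integral_eq_lintegral_ofReal hint (ae_of_all _ fun x => by positivity),
    integral_const_mul, integral_exp_mul_Ioi (by linarith),
    mul_zero, exp_zero, neg_div, ← div_neg, neg_sub, mul_one_div]

lemma integrable_exp_mul_expMeasure (hr : 0 < r) (hs : s < r) :
    Integrable (fun x => exp (s * x)) (expMeasure r) := by
  refine ⟨by fun_prop, ?_⟩
  rw [hasFiniteIntegral_iff_ofReal (ae_of_all _ fun x => (exp_pos _).le),
    lintegral_exp_mul_expMeasure hr hs]
  exact ENNReal.ofReal_lt_top

lemma mgf_id_expMeasure (hr : 0 < r) (hs : s < r) : mgf id (expMeasure r) s = r / (r - s) := by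
  rw [mgf, integral_eq_lintegral_of_nonneg_ae (ae_of_all _ fun x => (exp_pos _).le) (by fun_prop)]
  simp only [id]
  rw [lintegral_exp_mul_expMeasure hr hs, ENNReal.toReal_ofReal (div_nonneg hr.le (by linarith))]

lemma ae_nonneg_expMeasure : ∀ᵐ x ∂expMeasure r, 0 ≤ x := by
  rw [ae_iff]
  simp only [not_le]
  change expMeasure r (Set.Iio 0) = 0
  rw [expMeasure, gammaMeasure, withDensity_apply _ measurableSet_Iio]
  exact lintegral_gammaPDF_of_nonpos le_rfl

variable {Ω : Type*} [MeasurableSpace Ω] {P : Measure Ω} {U : Ω → ℝ}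

lemma integrable_exp_mul_of_map_eq_expMeasure (hU : Measurable U) (hlaw : P.map U = expMeasure r)
    (hr : 0 < r) (hs : s < r) : Integrable (fun ω => exp (s * U ω)) P := by
  have h := integrable_exp_mul_expMeasure hr hs
  rw [← hlaw, integrable_map_measure (by fun_prop) hU.aemeasurable] at h
  exact h

lemma mgf_eq_of_map_eq_expMeasure (hU : Measurable U) (hlaw : P.map U = expMeasure r)
    (hr : 0 < r) (hs : s < r) : mgf U P s = r / (r - s) := by
  rw [← mgf_id_map hU.aemeasurable, hlaw, mgf_id_expMeasure hr hs]

lemma ae_nonneg_of_map_eq_expMeasure (hU : Measurable U) (hlaw : P.map U = expMeasure r) :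
    ∀ᵐ ω ∂P, 0 ≤ U ω :=
  ae_of_ae_map hU.aemeasurable (hlaw ▸ ae_nonneg_expMeasure)

end ExponentialMoments

lemma two_div_two_sub_le_exp {t : ℝ} (ht0 : 0 ≤ t) (ht1 : t ≤ 1) : 2 / (2 - t) ≤ exp t := by
  rw [div_le_iff₀ (by linarith)]
  nlinarith [add_one_le_exp t]

section WeightedSums

variable {Ω : Type*} [MeasurableSpace Ω] {P : Measure Ω} {U : ℕ → Ω → ℝ}

lemma mgf_inv_mul_le_exp_inv {X : Ω → ℝ} (hX : Measurable X) (hlaw : P.map X = expMeasure 2)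
    (i : ℕ) : mgf (fun ω => (i : ℝ)⁻¹ * X ω) P 1 ≤ exp (i : ℝ)⁻¹ := by
  have hinv : (i : ℝ)⁻¹ ≤ 1 := Nat.cast_inv_le_one i
  rw [mgf_const_mul, mul_one, mgf_eq_of_map_eq_expMeasure hX hlaw two_pos (by linarith)]
  exact two_div_two_sub_le_exp (by positivity) hinv

lemma integrable_exp_inv_mul {X : Ω → ℝ} (hX : Measurable X) (hlaw : P.map X = expMeasure 2)
    (i : ℕ) : Integrable (fun ω => exp (1 * ((i : ℝ)⁻¹ * X ω))) P := by
  have hinv : (i : ℝ)⁻¹ ≤ 1 := Nat.cast_inv_le_one i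
  simpa only [one_mul] using
    integrable_exp_mul_of_map_eq_expMeasure hX hlaw two_pos (s := (i : ℝ)⁻¹) (by linarith)

lemma iIndepFun_inv_mul (hindep : iIndepFun U P) :
    iIndepFun (fun (i : ℕ) ω => (i : ℝ)⁻¹ * U i ω) P :=
  hindep.comp (fun (i : ℕ) x => (i : ℝ)⁻¹ * x) fun _ => measurable_const_mul _

lemma mgf_sum_inv_mul_le_exp_harmonic (hmeas : ∀ i, Measurable (U i)) (hindep : iIndepFun U P)
    (hlaw : ∀ i, P.map (U i) = expMeasure 2) (d : ℕ) :
    mgf (∑ i ∈ Finset.Icc 1 d, fun ω => (i : ℝ)⁻¹ * U i ω) P 1 ≤ exp (harmonic d) := by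
  rw [(iIndepFun_inv_mul hindep).mgf_sum fun i => (hmeas i).const_mul _]
  calc ∏ i ∈ Finset.Icc 1 d, mgf (fun ω => (i : ℝ)⁻¹ * U i ω) P 1
      ≤ ∏ i ∈ Finset.Icc 1 d, exp (i : ℝ)⁻¹ :=
        Finset.prod_le_prod (fun _ _ => mgf_nonneg) fun i _ =>
          mgf_inv_mul_le_exp_inv (hmeas i) (hlaw i) i
    _ = exp (harmonic d) := by
        rw [← exp_sum, harmonic_eq_sum_Icc]
        push_cast
        rfl

lemma measureReal_three_mul_log_le_sum_inv_mul_le (hmeas : ∀ i, Measurable (U i))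
    (hindep : iIndepFun U P) (hlaw : ∀ i, P.map (U i) = expMeasure 2) {d : ℕ} (hd : 1 ≤ d) :
    P.real {ω | 3 * log d ≤ ∑ i ∈ Finset.Icc 1 d, (i : ℝ)⁻¹ * U i ω} ≤ exp 1 / d ^ 2 := by
  have := hindep.isProbabilityMeasure
  have hint : Integrable
      (fun ω => exp (1 * (∑ i ∈ Finset.Icc 1 d, fun ω => (i : ℝ)⁻¹ * U i ω) ω)) P :=
    (iIndepFun_inv_mul hindep).integrable_exp_mul_sum (fun i => (hmeas i).const_mul _)
      fun i _ => integrable_exp_inv_mul (hmeas i) (hlaw i) i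
  calc P.real {ω | 3 * log d ≤ ∑ i ∈ Finset.Icc 1 d, (i : ℝ)⁻¹ * U i ω}
      ≤ exp (-1 * (3 * log d)) * mgf (∑ i ∈ Finset.Icc 1 d, fun ω => (i : ℝ)⁻¹ * U i ω) P 1 := by
        simpa only [Finset.sum_apply] using measure_ge_le_exp_mul_mgf _ zero_le_one hint
    _ ≤ exp (-1 * (3 * log d)) * exp (1 + log d) := by
        gcongr
        exact (mgf_sum_inv_mul_le_exp_harmonic hmeas hindep hlaw d).trans
          (exp_le_exp.2 (harmonic_le_one_add_log d))
    _ = exp 1 / d ^ 2 := by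
        have hd0 : (0 : ℝ) < d := by exact_mod_cast hd
        rw [← exp_add, show -1 * (3 * log d) + (1 + log d) = 1 - log ((d : ℝ) ^ 2) by
          rw [log_pow]; push_cast; ring, exp_sub, exp_log (by positivity)]

lemma ae_eventually_sum_inv_mul_lt_three_mul_log (hmeas : ∀ i, Measurable (U i))
    (hindep : iIndepFun U P) (hlaw : ∀ i, P.map (U i) = expMeasure 2) :
    ∀ᵐ ω ∂P, ∀ᶠ d : ℕ in atTop, ∑ i ∈ Finset.Icc 1 d, (i : ℝ)⁻¹ * U i ω < 3 * log d := by
  have := hindep.isProbabilityMeasure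
  set A : ℕ → Set Ω := fun d => {ω | 3 * log d ≤ ∑ i ∈ Finset.Icc 1 d, (i : ℝ)⁻¹ * U i ω}
  have htail : ∀ d : ℕ, P (A (d + 1)) ≤ ENNReal.ofReal (exp 1 / ((d : ℝ) + 1) ^ 2) := fun d => by
    rw [← ofReal_measureReal]
    exact ENNReal.ofReal_le_ofReal (by
      exact_mod_cast measureReal_three_mul_log_le_sum_inv_mul_le hmeas hindep hlaw d.succ_pos)
  have hsummable : Summable fun d : ℕ => exp 1 / ((d : ℝ) + 1) ^ 2 := by
    have := (summable_nat_add_iff 1).2 (Real.summable_one_div_nat_pow.2 one_lt_two)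
    simpa [div_eq_mul_inv] using this.mul_left (exp 1)
  have hsum : ∑' d, P (A d) ≠ ⊤ := by
    rw [tsum_eq_zero_add' ENNReal.summable]
    refine ENNReal.add_ne_top.2
      ⟨measure_ne_top _ _, ne_top_of_le_ne_top ?_ (ENNReal.tsum_le_tsum htail)⟩
    rw [← ENNReal.ofReal_tsum_of_nonneg (fun _ => by positivity) hsummable]
    exact ENNReal.ofReal_ne_top
  filter_upwards [ae_eventually_notMem hsum] with ω hω
  filter_upwards [hω] with d hd
  simpa [A] using hd

end WeightedSums

lemma abs_div_add_mul_sub_div_add_mul_le {c x a a' : ℝ} (hc : 0 ≤ c) (hx : 0 < x) (ha : 0 < a)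
    (ha' : 0 < a') : |c / (c + x * a) - c / (c + x * a')| ≤ c * |a - a'| / (a * a') * x⁻¹ := by
  have h : 0 < c + x * a := by positivity
  have h' : 0 < c + x * a' := by positivity
  rw [div_sub_div _ _ h.ne' h'.ne', abs_div, abs_of_pos (mul_pos h h'),
    show c * (c + x * a') - (c + x * a) * c = c * x * (a' - a) by ring, abs_mul,
    abs_of_nonneg (by positivity : 0 ≤ c * x), abs_sub_comm]
  calc c * x * |a - a'| / ((c + x * a) * (c + x * a'))
      ≤ c * x * |a - a'| / ((x * a) * (x * a')) := by
        gcongr <;> linarith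
    _ = c * |a - a'| / (a * a') * x⁻¹ := by
        field_simp

lemma sum_abs_sub_le_mul_sum_inv_mul {a a' : ℝ} (ha : 0 < a) (ha' : 0 < a') {u : ℕ → ℝ}
    (hu : ∀ i, 0 ≤ u i) (d : ℕ) :
    ∑ i ∈ Finset.Icc 1 d, |2 / (2 + i * a) * u i - 2 / (2 + i * a') * u i| ≤
      2 * |a - a'| / (a * a') * ∑ i ∈ Finset.Icc 1 d, (i : ℝ)⁻¹ * u i := by
  rw [Finset.mul_sum]
  refine Finset.sum_le_sum fun i hi => ?_
  have hi : (0 : ℝ) < i := by exact_mod_cast (Finset.mem_Icc.1 hi).1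
  rw [← sub_mul, abs_mul, abs_of_nonneg (hu i), ← mul_assoc]
  exact mul_le_mul_of_nonneg_right (abs_div_add_mul_sub_div_add_mul_le zero_le_two hi ha ha') (hu i)

lemma tendsto_div_nat_mul_div_add_nat_mul {a a' : ℝ} (ha : 0 < a) (ha' : 0 < a') (u : ℕ → ℝ) :
    Tendsto (fun d : ℕ => 2 / (2 + d * a') * u d / (d * (2 / (2 + d * a) * u d))) atTop (𝓝 0) := by
  have hbound : ∀ᶠ d : ℕ in atTop, 0 ≤ 2 / (2 + d * a') * u d / (d * (2 / (2 + d * a) * u d)) ∧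
      2 / (2 + d * a') * u d / (d * (2 / (2 + d * a) * u d)) ≤ (2 + a) / a' / d := by
    filter_upwards [eventually_ge_atTop 1] with d hd
    replace hd : (1 : ℝ) ≤ d := by exact_mod_cast hd
    have hle : (2 + d * a) / (d * (2 + d * a')) ≤ (2 + a) / a' / d := by
      rw [div_div, div_le_div_iff₀ (by positivity) (by positivity)]
      nlinarith [mul_nonneg (mul_nonneg ha'.le (sub_nonneg.2 hd)) (by positivity : (0 : ℝ) ≤ d)]
    obtain hu | hu := eq_or_ne (u d) 0
    · simp only [hu, mul_zero, div_zero, le_refl, true_and]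
      positivity
    · have : 2 / (2 + d * a') * u d / (d * (2 / (2 + d * a) * u d)) =
          (2 + d * a) / (d * (2 + d * a')) := by
        field_simp
      rw [this]
      exact ⟨by positivity, hle⟩
  exact tendsto_of_tendsto_of_tendsto_of_le_of_le' tendsto_const_nhds
    (tendsto_const_div_atTop_nhds_zero_nat _) (hbound.mono fun _ h => h.1)
    (hbound.mono fun _ h => h.2)

theorem coupling_pi_a_pi_a'_general {Ω : Type*} [MeasurableSpace Ω] (P : Measure Ω)
    (a a' : ℝ) (ha : 0 < a) (ha' : 0 < a')
    (U : ℕ → Ω → ℝ) (hmeas : ∀ i, Measurable (U i))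
    (hindep : iIndepFun U P)
    (hlaw : ∀ i, P.map (U i) = expMeasure 2)
    (V : ℝ → ℕ → Ω → ℝ)
    (hV : ∀ (c : ℝ) (i : ℕ) (ω : Ω), V c i ω = (2 / (2 + i * c)) * U i ω) :
    (∀ᵐ ω ∂P, IsBoundedUnder (· ≤ ·) atTop (fun d : ℕ =>
      (Real.log d)⁻¹ * ∑ i ∈ Finset.Icc 1 d, |V a i ω - V a' i ω|)) ∧
    (∀ᵐ ω ∂P, atTop.limsup (fun d : ℕ => V a' d ω / (d * V a d ω)) = 0) := by
  simp only [hV]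
  refine ⟨?_, ae_of_all _ fun ω =>
    (tendsto_div_nat_mul_div_add_nat_mul ha ha' fun d => U d ω).limsup_eq⟩
  filter_upwards [ae_all_iff.2 fun i => ae_nonneg_of_map_eq_expMeasure (hmeas i) (hlaw i),
    ae_eventually_sum_inv_mul_lt_three_mul_log hmeas hindep hlaw] with ω hnonneg hsmall
  refine isBoundedUnder_of_eventually_le (a := 2 * |a - a'| / (a * a') * 3) ?_
  filter_upwards [hsmall, eventually_gt_atTop 1] with d hd hd1
  have hlog : 0 < log d := log_pos (by exact_mod_cast hd1)
  rw [inv_mul_le_iff₀ hlog]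
  calc ∑ i ∈ Finset.Icc 1 d, |2 / (2 + i * a) * U i ω - 2 / (2 + i * a') * U i ω|
      ≤ 2 * |a - a'| / (a * a') * ∑ i ∈ Finset.Icc 1 d, (i : ℝ)⁻¹ * U i ω :=
        sum_abs_sub_le_mul_sum_inv_mul ha ha' hnonneg d
    _ ≤ 2 * |a - a'| / (a * a') * (3 * log d) := by gcongr
    _ = log d * (2 * |a - a'| / (a * a') * 3) := by ring

/-- Coupling of π_a and π_{a'} via iid Exp(2) variables: the partial sums of
|V_{a,i} - V_{a',i}| are O(log d) and V_{a',d}/(d V_{a,d}) has limsup 0, almost surely. -/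
theorem coupling_pi_a_pi_a' {Ω : Type*} [MeasurableSpace Ω] (P : Measure Ω)
    [IsProbabilityMeasure P] (a a' : ℝ) (ha : 0 < a) (ha' : 0 < a')
    (U : ℕ → Ω → ℝ) (hmeas : ∀ i, Measurable (U i))
    (hindep : iIndepFun U P)
    (hlaw : ∀ i, P.map (U i) = expMeasure 2)
    (V : ℝ → ℕ → Ω → ℝ)
    (hV : ∀ (c : ℝ) (i : ℕ) (ω : Ω), V c i ω = (2 / (2 + i * c)) * U i ω) :
    (∀ᵐ ω ∂P, IsBoundedUnder (· ≤ ·) atTop (fun d : ℕ =>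
      (Real.log d)⁻¹ * ∑ i ∈ Finset.Icc 1 d, |V a i ω - V a' i ω|)) ∧
    (∀ᵐ ω ∂P, atTop.limsup (fun d : ℕ => V a' d ω / (d * V a d ω)) = 0) :=
  coupling_pi_a_pi_a'_general P a a' ha ha' U hmeas hindep hlaw V hV
end
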